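/- Let C be a category with a functorial weak factorization system (L, R) realized by (F, L, R), and suppose the subcategory C_L (wide subcategory with morphisms in L) has all finite poset-shaped colimits preserved by the inclusion into C, and colimit inclusions lie in L. Then any diagram X : J → C over a finite poset J admits an injectification: a functor X̂ : J → C whose morphisms X̂(i ≤ j) all lie in L, together with a natural transformation ε : X̂ ⇒ X with every component in R. -/

import Mathlib

open CategoryTheory

universe v u

/-- A weak factorization system `(L, R)` on `C`: every morphism factors as a
morphism in `L` followed by one in `R`, and `L`, `R` are characterized by the
mutual lifting properties (`L = ᗮR` and `Lᗮ = R`). -/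
structure WFS (C : Type u) [Category.{v} C] (L R : MorphismProperty C) : Prop where
  fact : ∀ ⦃A B : C⦄ (f : A ⟶ B),
    ∃ (Z : C) (l : A ⟶ Z) (r : Z ⟶ B), L l ∧ R r ∧ l ≫ r = f
  llp_char : ∀ ⦃A B : C⦄ (f : A ⟶ B),
    L f ↔ ∀ ⦃X Y : C⦄ (g : X ⟶ Y), R g → HasLiftingProperty f g
  rlp_char : ∀ ⦃X Y : C⦄ (g : X ⟶ Y),
    R g ↔ ∀ ⦃A B : C⦄ (f : A ⟶ B), L f → HasLiftingProperty f g

/-- A functorial realization `(F, L, R)` of a weak factorization system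
`(L, R)`: a functorial factorization whose left part lands in `L` and whose
right part lands in `R`, acting functorially on commutative squares. -/
structure FunctorialRealization (C : Type u) [Category.{v} C]
    (L R : MorphismProperty C) where
  mid : ∀ ⦃A B : C⦄, (A ⟶ B) → C
  left : ∀ ⦃A B : C⦄ (f : A ⟶ B), A ⟶ mid f
  right : ∀ ⦃A B : C⦄ (f : A ⟶ B), mid f ⟶ B
  left_mem : ∀ ⦃A B : C⦄ (f : A ⟶ B), L (left f)
  right_mem : ∀ ⦃A B : C⦄ (f : A ⟶ B), R (right f)
  fac : ∀ ⦃A B : C⦄ (f : A ⟶ B), left f ≫ right f = f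
  sq : ∀ ⦃A B A' B' : C⦄ ⦃f : A ⟶ B⦄ ⦃g : A' ⟶ B'⦄
    (u : A ⟶ A') (v : B ⟶ B'), f ≫ v = u ≫ g → (mid f ⟶ mid g)
  sq_left : ∀ ⦃A B A' B' : C⦄ ⦃f : A ⟶ B⦄ ⦃g : A' ⟶ B'⦄
    (u : A ⟶ A') (v : B ⟶ B') (h : f ≫ v = u ≫ g),
    left f ≫ sq u v h = u ≫ left g
  sq_right : ∀ ⦃A B A' B' : C⦄ ⦃f : A ⟶ B⦄ ⦃g : A' ⟶ B'⦄
    (u : A ⟶ A') (v : B ⟶ B') (h : f ≫ v = u ≫ g),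
    sq u v h ≫ right g = right f ≫ v
  sq_id : ∀ ⦃A B : C⦄ (f : A ⟶ B),
    sq (𝟙 A) (𝟙 B) (by simp) = 𝟙 (mid f)
  sq_comp : ∀ ⦃A B A' B' A'' B'' : C⦄ ⦃f : A ⟶ B⦄ ⦃g : A' ⟶ B'⦄ ⦃h : A'' ⟶ B''⦄
    (u : A ⟶ A') (v : B ⟶ B') (hi : f ≫ v = u ≫ g)
    (u' : A' ⟶ A'') (v' : B' ⟶ B'') (hj : g ≫ v' = u' ≫ h),
    sq (u ≫ u') (v ≫ v')
      (by rw [← Category.assoc, hi, Category.assoc, hj, ← Category.assoc]) =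
      sq u v hi ≫ sq u' v' hj

/-- `C_L` has all finite-poset-shaped colimits, preserved by the inclusion
`C_L ↪ C`: every finite-poset-shaped diagram in `C` all of whose morphisms lie
in `L` admits a colimit cocone in `C` whose coprojections all lie in `L`. -/
def HasFinitePosetColimitsInL (C : Type u) [Category.{v} C]
    (L : MorphismProperty C) : Prop :=
  ∀ (J : Type) [PartialOrder J] [Fintype J] (D : J ⥤ C),
    (∀ ⦃i j : J⦄ (h : i ⟶ j), L (D.map h)) →
    ∃ c : Limits.Cocone D, Nonempty (Limits.IsColimit c) ∧ ∀ i, L (c.ι.app i)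

section helpers
variable {C : Type u} [Category.{v} C] {L R : MorphismProperty C} (hwfs : WFS C L R)
include hwfs

lemma wfs_L_iso {A B : C} (f : A ⟶ B) [IsIso f] : L f :=
  (hwfs.llp_char f).2 fun _ _ g _ => inferInstance

lemma wfs_L_comp {A B D : C} {f : A ⟶ B} {g : B ⟶ D} (hf : L f) (hg : L g) :
    L (f ≫ g) := by
  rw [hwfs.llp_char] at hf hg ⊢
  intro X Y p hp
  have := hf p hp; have := hg p hp
  infer_instance

lemma wfs_R_iso {A B : C} (f : A ⟶ B) [IsIso f] : R f :=
  (hwfs.rlp_char f).2 fun _ _ g _ => inferInstance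

lemma wfs_R_comp {A B D : C} {f : A ⟶ B} {g : B ⟶ D} (hf : R f) (hg : R g) :
    R (f ≫ g) := by
  rw [hwfs.rlp_char] at hf hg ⊢
  intro X Y p hp
  have := hf p hp; have := hg p hp
  infer_instance

lemma wfs_L_eq_comp {A A' B B' : C} {f : A ⟶ B} (hf : L f)
    (h : A' = A) (h' : B = B') : L (eqToHom h ≫ f ≫ eqToHom h') :=
  wfs_L_comp hwfs (wfs_L_iso hwfs _) (wfs_L_comp hwfs hf (wfs_L_iso hwfs _))

lemma wfs_R_eq_comp {A A' B B' : C} {f : A ⟶ B} (hf : R f)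
    (h : A' = A) (h' : B = B') : R (eqToHom h ≫ f ≫ eqToHom h') :=
  wfs_R_comp hwfs (wfs_R_iso hwfs _) (wfs_R_comp hwfs hf (wfs_R_iso hwfs _))

end helpers

theorem injectification_aux {C : Type u} [Category.{v} C]
    (L R : MorphismProperty C) (hwfs : WFS C L R)
    (F : FunctorialRealization C L R)
    (hcolim : HasFinitePosetColimitsInL C L) (n : ℕ) :
    ∀ (J : Type) [PartialOrder J] [Fintype J], Fintype.card J ≤ n →
    ∀ (X : J ⥤ C),
    ∃ (Xhat : J ⥤ C) (ε : Xhat ⟶ X),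
      (∀ ⦃i j : J⦄ (h : i ⟶ j), L (Xhat.map h)) ∧
      (∀ i : J, R (ε.app i)) := by
  induction n with
  | zero =>
    intro J _ _ hcard X
    have : IsEmpty J := Fintype.card_eq_zero_iff.mp (Nat.le_zero.mp hcard)
    exact ⟨X, 𝟙 X, fun i => isEmptyElim i, fun i => isEmptyElim i⟩
  | succ n IH =>
    intro J _ _ hcard X
    classical
    rcases isEmpty_or_nonempty J with hempty | hne
    · exact ⟨X, 𝟙 X, fun i => isEmptyElim i, fun i => isEmptyElim i⟩
    -- pick a maximal element m
    obtain ⟨m, -, hm⟩ := Set.Finite.exists_maximalFor id (Set.univ : Set J)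
      Set.finite_univ Set.univ_nonempty
    have amax : ∀ ⦃j : J⦄, m ≤ j → m = j := fun j h => le_antisymm h (hm (Set.mem_univ j) h)
    -- the poset without m
    let J' := {j : J // j ≠ m}
    have hcard' : Fintype.card J' ≤ n := by
      have h2 : Fintype.card J' < Fintype.card J :=
        Fintype.card_subtype_lt (p := fun j : J => j ≠ m) (x := m) (by simp)
      omega
    have inclm : Monotone (fun j : J' => (j : J)) := fun _ _ h => h
    obtain ⟨Xh', ε', hL', hR'⟩ := IH J' hcard' (inclm.functor ⋙ X)
    -- poset strictly below m
    let S := {i : J // i < m}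
    let toJ' : S → J' := fun i => ⟨i.1, ne_of_lt i.2⟩
    have toJ'm : Monotone toJ' := fun _ _ h => h
    let D : S ⥤ C := toJ'm.functor ⋙ Xh'
    obtain ⟨c, ⟨hc⟩, hcι⟩ := hcolim S D (fun i j h => hL' _)
    -- the comparison cocone into X m
    have subsing : ∀ {i j : J} (f g : i ⟶ j), f = g := fun f g => Subsingleton.elim f g
    let c2 : Limits.Cocone D :=
      { pt := X.obj m
        ι :=
          { app := fun i => ε'.app (toJ' i) ≫ X.map (homOfLE i.2.le)
            naturality := by
              intro i j f
              have h1 := ε'.naturality (toJ'm.functor.map f)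
              dsimp [D] at h1 ⊢
              refine ((Category.assoc _ _ _).symm.trans ((congrArg (· ≫ X.map (homOfLE j.2.le)) h1).trans
                (Category.assoc _ _ _))).trans ?_
              exact (congrArg (ε'.app (toJ' i) ≫ ·)
                ((X.map_comp _ _).symm.trans (congrArg X.map (subsing _ _)))).trans (Category.comp_id _).symm } }
    let φ : c.pt ⟶ X.obj m := hc.desc c2
    set Mφ := F.mid φ with hMφ
    -- the new functor
    let A : J → C := fun j => if h : j = m then Mφ else Xh'.obj ⟨j, h⟩
    have hAm : ∀ {j : J} (h : j = m), A j = Mφ := by intro j h; simp [A, h]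
    have hAn : ∀ {j : J} (h : j ≠ m), A j = Xh'.obj ⟨j, h⟩ := by
      intro j h; simp [A, h]
    let a : ∀ (i j : J), i ≤ j → (A i ⟶ A j) := fun i j hij =>
      if hj : j = m then
        (if hi : i = m then eqToHom (by rw [hAm hi, hAm hj]) else
          eqToHom (hAn hi) ≫ c.ι.app ⟨i, lt_of_le_of_ne (hj ▸ hij) hi⟩ ≫
            F.left φ ≫ eqToHom (hAm hj).symm)
      else
        (if hi : i = m then (hj (amax (hi ▸ hij)).symm).elim else
          eqToHom (hAn hi) ≫ Xh'.map (homOfLE hij) ≫ eqToHom (hAn hj).symm)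
    let Xhat : J ⥤ C :=
      { obj := A
        map := fun {i j} h => a i j (leOfHom h)
        map_id := by
          intro i
          by_cases hi : i = m
          · obtain rfl := hi.symm; simp [a]
          · simp [a, hi]
        map_comp := by
          intro i j k hij hjk
          by_cases hi : i = m
          · obtain rfl := hi.symm
            obtain rfl := amax (leOfHom hij)
            obtain rfl := amax (leOfHom hjk)
            simp [a]
          · by_cases hj : j = m
            · obtain rfl := hj.symm
              obtain rfl := amax (leOfHom hjk)
              simp [a, hi]
            · by_cases hk : k = m
              · obtain rfl := hk.symm
                have hlt_i : i < m := lt_of_le_of_ne ((leOfHom hij).trans (leOfHom hjk)) hi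
                have hlt_j : j < m := lt_of_le_of_ne (leOfHom hjk) hj
                have key := c.w (homOfLE (show (⟨i, hlt_i⟩ : S) ≤ ⟨j, hlt_j⟩ from leOfHom hij))
                dsimp [D] at key
                simp [a, hi, hj]
                rw [← key]
                erw [Category.assoc]
                rfl
              · simp [a, hi, hj, hk]
                rw [← Functor.map_comp_assoc]
                rfl }
    let e : ∀ j : J, A j ⟶ X.obj j := fun j =>
      if hj : j = m then eqToHom (hAm hj) ≫ F.right φ ≫ eqToHom (by rw [hj])
      else eqToHom (hAn hj) ≫ ε'.app ⟨j, hj⟩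
    let ε : Xhat ⟶ X :=
      { app := e
        naturality := by
          intro i j h
          by_cases hi : i = m
          · obtain rfl := hi.symm
            obtain rfl := amax (leOfHom h)
            have : h = 𝟙 m := subsing _ _
            subst this
            simp [a, e]
          · by_cases hj : j = m
            · obtain rfl := hj.symm
              have hlt : i < m := lt_of_le_of_ne (leOfHom h) hi
              have key := hc.fac c2 ⟨i, hlt⟩
              dsimp [c2] at key
              show a i m (leOfHom h) ≫ e m = e i ≫ X.map h
              simp only [a, e, dif_pos rfl, dif_neg hi, Category.assoc,
                eqToHom_trans, eqToHom_refl, Category.comp_id, eqToHom_trans_assoc,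
                Category.id_comp]
              erw [Category.assoc, Category.assoc, eqToHom_trans_assoc, eqToHom_refl, Category.id_comp]
              erw [F.fac φ, key]
              exact (Category.assoc _ _ _).symm
            · show a i j (leOfHom h) ≫ e j = e i ≫ X.map h
              have key := ε'.naturality
                (homOfLE (show (⟨i, hi⟩ : J') ≤ ⟨j, hj⟩ from leOfHom h))
              dsimp at key
              simp only [a, e, dif_neg hi, dif_neg hj, Category.assoc,
                eqToHom_trans_assoc, eqToHom_refl, Category.id_comp]
              erw [eqToHom_trans_assoc, eqToHom_refl, Category.id_comp, key]
              exact (Category.assoc _ _ _).symm }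
    refine ⟨Xhat, ε, ?_, ?_⟩
    · intro i j h
      show L (a i j (leOfHom h))
      by_cases hj : j = m
      · by_cases hi : i = m
        · simp only [a, dif_pos hj, dif_pos hi]
          exact wfs_L_iso hwfs _
        · simp only [a, dif_pos hj, dif_neg hi]
          exact wfs_L_comp hwfs (wfs_L_iso hwfs _)
            (wfs_L_comp hwfs (hcι _)
              (wfs_L_comp hwfs (F.left_mem φ) (wfs_L_iso hwfs _)))
      · by_cases hi : i = m
        · exact ((hj (amax (hi ▸ leOfHom h)).symm)).elim
        · simp only [a, dif_neg hj, dif_neg hi]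
          exact wfs_L_eq_comp hwfs (hL' _) _ _
    · intro i
      show R (e i)
      by_cases hi : i = m
      · simp only [e, dif_pos hi]
        exact wfs_R_eq_comp hwfs (F.right_mem φ) _ _
      · simp only [e, dif_neg hi]
        exact wfs_R_comp hwfs (wfs_R_iso hwfs _) (hR' _)

/-- given a functorial weak factorization system `(L, R)` on `C`
such that `C_L` has all finite-poset-shaped colimits preserved by the inclusion
into `C`, with colimit coprojections in `L`, every diagram `X : J ⥤ C` over a
finite poset `J` admits an injectification: a functor `X̂ : J ⥤ C` all of whose
structure morphisms lie in `L`, together with a natural transformation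
`ε : X̂ ⟶ X` all of whose components lie in `R`. -/
theorem injectification_exists {C : Type u} [Category.{v} C]
    (L R : MorphismProperty C) (hwfs : WFS C L R)
    (F : FunctorialRealization C L R)
    (hcolim : HasFinitePosetColimitsInL C L)
    (J : Type) [PartialOrder J] [Fintype J] (X : J ⥤ C) :
    ∃ (Xhat : J ⥤ C) (ε : Xhat ⟶ X),
      (∀ ⦃i j : J⦄ (h : i ⟶ j), L (Xhat.map h)) ∧
      (∀ i : J, R (ε.app i)) :=
  injectification_aux L R hwfs F hcolim (Fintype.card J) J le_rfl X
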